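/- arXiv:2208.06879 — 4 statements merged into one kernel-verified Lean document; each statement's English description precedes it below -/
import Mathlib

section
/- For every x, if p x is an inductive set then p (s x) is an inductive set. -/
def ind {i : Type*} (e : i) (s : i → i) (X : i → Prop) : Prop :=
  X e ∧ ∀ x, X x → X (s x)

def p {i : Type*} (e : i) (s : i → i) (f : i → i → i) (x y : i) : Prop :=
  ∀ X : i → Prop, ind e s X → X (f x y)

def N {i : Type*} (e : i) (s : i → i) (z : i) : Prop :=
  ∀ X : i → Prop, ind e s X → X z

def pN {i : Type*} (e : i) (s : i → i) (f : i → i → i) (x y : i) : Prop :=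
  N e s (f x y)

theorem stmt3 {i : Type*} (e : i) (s : i → i) (f : i → i → i)
    (A1 : ∀ n, f n e = s e) (A3 : ∀ x y, f (s x) (s y) = f x (f (s x) y)) :
    ∀ x, ind e s (p e s f x) → ind e s (p e s f (s x)) := by
  intro x hx
  constructor
  · intro X hX
    rw [A1]
    exact hX.2 e hX.1
  · intro y hy X hX
    rw [A3]
    exact hy (p e s f x) hx X hX
end

section
/- For all x and all predicates Y, if p x, p (s x), and Y are inductive sets, then Y (f (s x) (s (s (s (s e))))) holds. -/
theorem stmt4 {i : Type*} (e : i) (s : i → i) (f : i → i → i)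
    (A1 : ∀ n, f n e = s e) (A2 : ∀ y, f e (s y) = s (s (f e y)))
    (A3 : ∀ x y, f (s x) (s y) = f x (f (s x) y)) :
    ∀ (x : i) (Y : i → Prop), ind e s (p e s f x) → ind e s (p e s f (s x)) → ind e s Y →
      Y (f (s x) (s (s (s (s e))))) := by
  intro x Y _ h2 hY
  exact h2.2 _ (h2.2 _ (h2.2 _ (h2.2 _ h2.1))) Y hY
end

section
/- From the axioms A1–A5 it follows that d (f (s (s (s (s e)))) (s (s (s (s e))))) holds (Boolos' Curious Inference). -/
theorem stmt5 {i : Type*} (e : i) (s : i → i) (f : i → i → i) (d : i → Prop)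
    (A1 : ∀ n, f n e = s e) (A2 : ∀ y, f e (s y) = s (s (f e y)))
    (A3 : ∀ x y, f (s x) (s y) = f x (f (s x) y))
    (A4 : d e) (A5 : ∀ x, d x → d (s x)) :
    d (f (s (s (s (s e)))) (s (s (s (s e))))) := by
  have Ne : N e s e := fun X h => h.1
  have Ns : ∀ z, N e s z → N e s (s z) := fun z hz X h => h.2 z (hz X h)
  -- Q x : f x maps N into N
  set Q : i → Prop := fun x => ∀ y, N e s y → N e s (f x y) with hQ
  have indQ : ind e s Q := by
    constructor
    · intro y hy
      exact hy (fun y => N e s (f e y))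
        ⟨by show N e s (f e e); rw [A1]; exact Ns e Ne, fun y ih => by show N e s (f e (s y)); rw [A2]; exact Ns _ (Ns _ ih)⟩
    · intro x hx y hy
      exact hy (fun y => N e s (f (s x) y))
        ⟨by show N e s (f (s x) e); rw [A1]; exact Ns e Ne, fun y ih => by show N e s (f (s x) (s y)); rw [A3]; exact hx _ ih⟩
  have N4 : N e s (s (s (s (s e)))) := Ns _ (Ns _ (Ns _ (Ns _ Ne)))
  have : N e s (f (s (s (s (s e)))) (s (s (s (s e))))) :=
    N4 Q indQ _ N4
  exact this d ⟨A4, A5⟩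
end

section
/- For every x, if p x and p (s x) are inductive and z is any element lying in every inductive set, then f (s x) (s z) lies in every inductive set, i.e., p (s x) (s z) holds. -/
theorem stmt12 {i : Type*} (e : i) (s : i → i) (f : i → i → i)
    (A3 : ∀ x y, f (s x) (s y) = f x (f (s x) y)) :
    ∀ x : i, ind e s (pN e s f x) → ind e s (pN e s f (s x)) →
      ∀ z : i, N e s z → pN e s f (s x) (s z) := by
  intro x h1 h2 z hz
  have hw : pN e s f (s x) z := hz _ h2
  have : pN e s f x (f (s x) z) := hw _ h1
  unfold pN at *
  rw [A3]
  exact this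
end
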